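/- For any finite family of commutative rings R₁, ..., Rₙ, the weak Gorenstein global dimension of the product ring satisfies wGgldim(∏ᵢ Rᵢ) = sup{wGgldim(Rᵢ) : 1 ≤ i ≤ n}. -/

import Mathlib

open TensorProduct

universe u

section NCTensor
variable (R : Type u) [Ring R]

/-- Generators of the defect submodule used to define the tensor product of a right
`R`-module `N` and a left `R`-module `M` over a (possibly noncommutative) ring `R`. -/
def NCRel (N M : Type u) [AddCommGroup N] [Module Rᵐᵒᵖ N] [AddCommGroup M] [Module R M] :
    Submodule ℤ (N ⊗[ℤ] M) :=
  Submodule.span ℤ { t | ∃ (n : N) (r : R) (m : M),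
    t = (MulOpposite.op r • n) ⊗ₜ[ℤ] m - n ⊗ₜ[ℤ] (r • m) }

/-- The tensor product `N ⊗_R M` of a right `R`-module and a left `R`-module, as an
abelian group. -/
def NCTensor (N M : Type u) [AddCommGroup N] [Module Rᵐᵒᵖ N] [AddCommGroup M] [Module R M] :
    Type u :=
  (N ⊗[ℤ] M) ⧸ NCRel R N M

noncomputable instance (N M : Type u) [AddCommGroup N] [Module Rᵐᵒᵖ N] [AddCommGroup M] [Module R M] :
    AddCommGroup (NCTensor R N M) :=
  inferInstanceAs (AddCommGroup ((N ⊗[ℤ] M) ⧸ NCRel R N M))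

noncomputable instance (N M : Type u) [AddCommGroup N] [Module Rᵐᵒᵖ N] [AddCommGroup M] [Module R M] :
    Module ℤ (NCTensor R N M) :=
  inferInstanceAs (Module ℤ ((N ⊗[ℤ] M) ⧸ NCRel R N M))

/-- The map `I ⊗_R M → I ⊗_R M'` induced by a map `M →ₗ[R] M'` of left modules. -/
noncomputable def NCmap (N : Type u) [AddCommGroup N] [Module Rᵐᵒᵖ N] {M M' : Type u} [AddCommGroup M]
    [Module R M] [AddCommGroup M'] [Module R M'] (f : M →ₗ[R] M') :
    NCTensor R N M →ₗ[ℤ] NCTensor R N M' :=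
  Submodule.mapQ _ _ (LinearMap.lTensor N (f.restrictScalars ℤ)) <| by
    rw [NCRel, Submodule.span_le]
    rintro t ⟨n, r, m, rfl⟩
    refine Submodule.mem_comap.mpr (Submodule.subset_span ?_)
    refine ⟨n, r, f m, ?_⟩
    have h : LinearMap.lTensor N (f.restrictScalars ℤ)
        ((MulOpposite.op r • n) ⊗ₜ[ℤ] m - n ⊗ₜ[ℤ] (r • m)) =
        (MulOpposite.op r • n) ⊗ₜ[ℤ] f m - n ⊗ₜ[ℤ] (r • f m) := by
      simp [LinearMap.lTensor_tmul, map_sub, LinearMap.map_smul]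
    exact h

/-- The map `N ⊗_R M → N' ⊗_R M` induced by a map `N →ₗ[Rᵐᵒᵖ] N'` of right modules. -/
noncomputable def NCmapL (R : Type u) [Ring R] {N N' : Type u} [AddCommGroup N]
    [Module Rᵐᵒᵖ N] [AddCommGroup N'] [Module Rᵐᵒᵖ N'] (M : Type u) [AddCommGroup M]
    [Module R M] (f : N →ₗ[Rᵐᵒᵖ] N') :
    NCTensor R N M →ₗ[ℤ] NCTensor R N' M :=
  Submodule.mapQ _ _ (LinearMap.rTensor M f.toAddMonoidHom.toIntLinearMap) <| by
    rw [NCRel, Submodule.span_le]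
    rintro t ⟨n, r, m, rfl⟩
    refine Submodule.mem_comap.mpr (Submodule.subset_span ?_)
    refine ⟨f n, r, m, ?_⟩
    have h : LinearMap.rTensor M f.toAddMonoidHom.toIntLinearMap
        ((MulOpposite.op r • n) ⊗ₜ[ℤ] m - n ⊗ₜ[ℤ] (r • m)) =
        (MulOpposite.op r • f n) ⊗ₜ[ℤ] m - f n ⊗ₜ[ℤ] (r • m) := by
      simp [LinearMap.rTensor_tmul, map_sub, LinearMap.map_smul]
    exact h

/-- A left `R`-module `M` (over a possibly noncommutative ring) is flat if tensoring with
`M` preserves injectivity of maps of right `R`-modules. -/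
def FlatModule (R : Type u) [Ring R] (M : Type u) [AddCommGroup M] [Module R M] : Prop :=
  ∀ (N N' : Type u) [AddCommGroup N] [Module Rᵐᵒᵖ N] [AddCommGroup N'] [Module Rᵐᵒᵖ N']
    (f : N →ₗ[Rᵐᵒᵖ] N'), Function.Injective f → Function.Injective (NCmapL R M f)

end NCTensor
section GDefs
variable (R : Type u) [Ring R]

/-- A complete flat resolution witnessing that `M` is a Gorenstein flat left `R`-module:
an exact sequence `⋯ → F₂ → F₁ → F₀ → F₋₁ → ⋯` of flat left `R`-modules with
`M ≅ Im(F₀ → F₋₁)` which stays exact after applying `I ⊗_R -` for every injective right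
`R`-module `I`. -/
structure CompleteFlatResolution (M : Type u) [AddCommGroup M] [Module R M] :
    Type (u + 1) where
  F : ℤ → ModuleCat.{u} R
  d : ∀ z : ℤ, F (z + 1) →ₗ[R] F z
  flat : ∀ z, FlatModule R (F z)
  exact : ∀ z, Function.Exact (d (z + 1)) (d z)
  iso : Nonempty (M ≃ₗ[R] LinearMap.range (d (-1)))
  tensorExact : ∀ (I : Type u) [AddCommGroup I] [Module Rᵐᵒᵖ I], Module.Injective Rᵐᵒᵖ I →
    ∀ z, Function.Exact (NCmap R I (d (z + 1))) (NCmap R I (d z))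

/-- A left `R`-module is Gorenstein flat if it admits a complete flat resolution. -/
def IsGorensteinFlat (M : Type u) [AddCommGroup M] [Module R M] : Prop :=
  Nonempty (CompleteFlatResolution R M)

/-- A complete projective resolution witnessing that `M` is a Gorenstein projective left
`R`-module. -/
structure CompleteProjResolution (M : Type u) [AddCommGroup M] [Module R M] :
    Type (u + 1) where
  P : ℤ → ModuleCat.{u} R
  d : ∀ z : ℤ, P (z + 1) →ₗ[R] P z
  proj : ∀ z, Module.Projective R (P z)
  exact : ∀ z, Function.Exact (d (z + 1)) (d z)
  iso : Nonempty (M ≃ₗ[R] LinearMap.range (d (-1)))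
  homExact : ∀ (Q : Type u) [AddCommGroup Q] [Module R Q], Module.Projective R Q →
    ∀ z, Function.Exact (fun g : P z →ₗ[R] Q => g.comp (d z))
      (fun g : P (z + 1) →ₗ[R] Q => g.comp (d (z + 1)))

/-- A left `R`-module is Gorenstein projective if it admits a complete projective
resolution. -/
def IsGorensteinProjective (M : Type u) [AddCommGroup M] [Module R M] : Prop :=
  Nonempty (CompleteProjResolution R M)

/-- `gfdLE R n M` : the Gorenstein flat dimension of the left `R`-module `M` is at most
`n`, i.e. `M` has a resolution of length `n` by Gorenstein flat modules. -/
def gfdLE : ℕ → ModuleCat.{u} R → Prop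
  | 0, M => IsGorensteinFlat R M
  | n + 1, M => ∃ (G : ModuleCat.{u} R) (f : G →ₗ[R] M), Function.Surjective f ∧
      IsGorensteinFlat R G ∧ gfdLE n (ModuleCat.of R (LinearMap.ker f))

/-- `gpdLE R n M` : the Gorenstein projective dimension of `M` is at most `n`. -/
def gpdLE : ℕ → ModuleCat.{u} R → Prop
  | 0, M => IsGorensteinProjective R M
  | n + 1, M => ∃ (G : ModuleCat.{u} R) (f : G →ₗ[R] M), Function.Surjective f ∧
      IsGorensteinProjective R G ∧ gpdLE n (ModuleCat.of R (LinearMap.ker f))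

/-- `fdLE R n M` : the flat dimension of `M` is at most `n`. -/
def fdLE : ℕ → ModuleCat.{u} R → Prop
  | 0, M => FlatModule R M
  | n + 1, M => ∃ (G : ModuleCat.{u} R) (f : G →ₗ[R] M), Function.Surjective f ∧
      FlatModule R G ∧ fdLE n (ModuleCat.of R (LinearMap.ker f))

/-- `pdLE R n M` : the projective dimension of `M` is at most `n`. -/
def pdLE : ℕ → ModuleCat.{u} R → Prop
  | 0, M => Module.Projective R M
  | n + 1, M => ∃ (G : ModuleCat.{u} R) (f : G →ₗ[R] M), Function.Surjective f ∧
      Module.Projective R G ∧ pdLE n (ModuleCat.of R (LinearMap.ker f))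

/-- `idLE R n M` : the injective dimension of `M` is at most `n`. -/
def idLE : ℕ → ModuleCat.{u} R → Prop
  | 0, M => Module.Injective R M
  | n + 1, M => ∃ (I : ModuleCat.{u} R) (f : M →ₗ[R] I), Function.Injective f ∧
      Module.Injective R I ∧ idLE n (ModuleCat.of R (I ⧸ LinearMap.range f))

/-- Gorenstein flat dimension, valued in `ℕ∞`. -/
noncomputable def gfDim (M : ModuleCat.{u} R) : ℕ∞ :=
  sInf {n : ℕ∞ | ∃ k : ℕ, n = k ∧ gfdLE R k M}

/-- Flat dimension, valued in `ℕ∞`. -/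
noncomputable def flatDim (M : ModuleCat.{u} R) : ℕ∞ :=
  sInf {n : ℕ∞ | ∃ k : ℕ, n = k ∧ fdLE R k M}

/-- Injective dimension, valued in `ℕ∞`. -/
noncomputable def injDim (M : ModuleCat.{u} R) : ℕ∞ :=
  sInf {n : ℕ∞ | ∃ k : ℕ, n = k ∧ idLE R k M}

/-- The (left) weak Gorenstein global dimension of `R`:
the supremum of Gorenstein flat dimensions of all left `R`-modules. -/
noncomputable def wGgldim : ℕ∞ :=
  ⨆ M : ModuleCat.{u} R, gfDim R M

/-- `IFD R` : the supremum of flat dimensions of injective left `R`-modules. -/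
noncomputable def IFD : ℕ∞ :=
  ⨆ M : ModuleCat.{u} R, ⨆ (_ : Module.Injective R M), flatDim R M

/-- A ring is left coherent if every finitely generated left ideal is finitely
presented. -/
def LeftCoherent : Prop :=
  ∀ I : Submodule R R, I.FG → Module.FinitePresentation R I

/-- A ring is right coherent if every finitely generated right ideal is finitely
presented; right ideals are viewed as left ideals of `Rᵐᵒᵖ`. -/
def RightCoherent : Prop := LeftCoherent Rᵐᵒᵖ

end GDefs

/-- `TorVanishGT R n I M` : `Tor_i^R(I, M) = 0` for all `i > n`, expressed by saying that
for every projective resolution `P• → M` of left modules, the complex `I ⊗_R P•` obtained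
by tensoring with the right module `I` is exact at every spot of index `> n`. -/
noncomputable def TorVanishGT (R : Type u) [Ring R] (n : ℕ) (I : Type u) [AddCommGroup I]
    [Module Rᵐᵒᵖ I] (M : ModuleCat.{u} R) : Prop :=
  ∀ (P : ℕ → ModuleCat.{u} R) (d : ∀ i, P (i + 1) →ₗ[R] P i) (ε : P 0 →ₗ[R] M),
    (∀ i, Module.Projective R (P i)) → Function.Surjective ε →
    Function.Exact (d 0) ε → (∀ i, Function.Exact (d (i + 1)) (d i)) →
    ∀ j, n ≤ j → Function.Exact (NCmap R I (d (j + 1))) (NCmap R I (d j))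

/-!
Let `S = ∏ᵢ Rᵢ` and let `eᵢ ∈ S` be the central idempotents. Every `S`-module `M` is the
product of its components `eᵢ M`, which are `Rᵢ`-modules, and every `Rᵢ`-module is an
`S`-module through the projection `S → Rᵢ`. Both constructions preserve flatness and
injectivity, and they are compatible with `⊗`: `I ⊗_S M ≅ I ⊗_{Rᵢ} eᵢ M` for a right
`Rᵢ`-module `I`, and `N ⊗_S ∏ᵢ Aᵢ ≅ ∏ᵢ eᵢ N ⊗_{Rᵢ} Aᵢ`. So they carry complete flat
resolutions to complete flat resolutions, whence `Gfd_S M ≤ n` if and only if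
`Gfd_{Rᵢ} (eᵢ M) ≤ n` for every `i`. Since every `Rᵢ`-module is such a component, taking
suprema gives the theorem.
-/

namespace NCTensor

open MulOpposite

variable (R : Type u) [Ring R] {N M : Type u} [AddCommGroup N] [Module Rᵐᵒᵖ N]
  [AddCommGroup M] [Module R M]

noncomputable def tmul (n : N) (m : M) : NCTensor R N M := Submodule.Quotient.mk (n ⊗ₜ[ℤ] m)

variable {R}

lemma op_smul_tmul (r : R) (n : N) (m : M) : tmul R (op r • n) m = tmul R n (r • m) :=
  (Submodule.Quotient.eq _).mpr (Submodule.subset_span ⟨n, r, m, rfl⟩)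

lemma tmul_add (n : N) (m m' : M) : tmul R n (m + m') = tmul R n m + tmul R n m' := by
  rw [tmul, TensorProduct.tmul_add]; rfl

@[ext]
lemma ext {P : Type*} [AddCommGroup P] {f g : NCTensor R N M →ₗ[ℤ] P}
    (h : ∀ n m, f (tmul R n m) = g (tmul R n m)) : f = g :=
  Submodule.linearMap_qext _ (TensorProduct.ext' h)

lemma tmul_zero (n : N) : tmul R n (0 : M) = 0 := by
  rw [tmul, TensorProduct.tmul_zero]; rfl

lemma tmul_sum {ι : Type*} (n : N) (s : Finset ι) (m : ι → M) :
    tmul R n (∑ i ∈ s, m i) = ∑ i ∈ s, tmul R n (m i) :=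
  map_sum (AddMonoidHom.mk' (tmul R n) (tmul_add n)) m s

lemma subsingleton_of_right [Subsingleton M] : Subsingleton (NCTensor R N M) :=
  (Submodule.Quotient.mk_surjective _).subsingleton

variable {P : Type u} [AddCommGroup P]

noncomputable def lift (b : N →ₗ[ℤ] M →ₗ[ℤ] P)
    (hb : ∀ n (r : R) m, b (op r • n) m = b n (r • m)) : NCTensor R N M →ₗ[ℤ] P :=
  (NCRel R N M).liftQ (TensorProduct.lift b) <| Submodule.span_le.2 <| by
    rintro _ ⟨n, r, m, rfl⟩
    refine LinearMap.mem_ker.2 ?_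
    erw [map_sub, TensorProduct.lift.tmul, TensorProduct.lift.tmul, hb, sub_self]

variable {S : Type u} [Ring S] {N' M' : Type u} [AddCommGroup N'] [Module Sᵐᵒᵖ N']
  [AddCommGroup M'] [Module S M']

noncomputable def map (g : N →+ N') (f : M →+ M')
    (h : ∀ n (r : R) m, tmul S (g (op r • n)) (f m) = tmul S (g n) (f (r • m))) :
    NCTensor R N M →ₗ[ℤ] NCTensor S N' M' :=
  NCTensor.lift
    (((TensorProduct.mk ℤ N' M').compl₁₂ g.toIntLinearMap f.toIntLinearMap).compr₂
      (NCRel S N' M').mkQ) h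

end NCTensor

lemma Function.Exact.piMap {ι : Type*} {A B C : ι → Type*} [∀ i, Zero (C i)]
    {f : ∀ i, A i → B i} {g : ∀ i, B i → C i} (h : ∀ i, Function.Exact (f i) (g i)) :
    Function.Exact (Pi.map f) (Pi.map g) := fun y => by
  refine ⟨fun hy => ?_, ?_⟩
  · choose x hx using fun i => (h i (y i)).1 (congrFun hy i)
    exact ⟨x, funext hx⟩
  · rintro ⟨x, rfl⟩
    exact funext fun i => (h i _).2 ⟨x i, rfl⟩

lemma ENat.le_of_forall_ge_natCast {a b : ℕ∞} (h : ∀ k : ℕ, b ≤ k → a ≤ k) : a ≤ b := by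
  induction b using ENat.recTopCoe with
  | top => exact le_top
  | coe k => exact h k le_rfl

namespace LinearMap

variable {ι : Type} {R A B : ι → Type u} [∀ i, Ring (R i)] [∀ i, AddCommGroup (A i)]
  [∀ i, Module (R i) (A i)] [∀ i, AddCommGroup (B i)] [∀ i, Module (R i) (B i)]

def piMap' (f : ∀ i, A i →ₗ[R i] B i) : (∀ i, A i) →ₗ[∀ i, R i] ∀ i, B i where
  toFun := Pi.map fun i => f i
  map_add' _ _ := funext fun i => map_add (f i) _ _
  map_smul' s a := funext fun i => map_smul (f i) (s i) (a i)

def _root_.LinearEquiv.piCongrRight' (e : ∀ i, A i ≃ₗ[R i] B i) :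
    (∀ i, A i) ≃ₗ[∀ i, R i] ∀ i, B i :=
  { piMap' fun i => (e i : A i →ₗ[R i] B i) with
    invFun := Pi.map fun i => (e i).symm
    left_inv a := funext fun i => (e i).symm_apply_apply (a i)
    right_inv b := funext fun i => (e i).apply_symm_apply (b i) }

def kerPiMap'Equiv (f : ∀ i, A i →ₗ[R i] B i) :
    (∀ i, ker (f i)) ≃ₗ[∀ i, R i] ker (piMap' f) where
  toFun v := ⟨fun i => v i, funext fun i => (v i).2⟩
  invFun w := fun i => ⟨w.1 i, congrFun w.2 i⟩
  map_add' _ _ := rfl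
  map_smul' _ _ := rfl

def rangePiMap'Equiv (f : ∀ i, A i →ₗ[R i] B i) :
    (∀ i, range (f i)) ≃ₗ[∀ i, R i] range (piMap' f) where
  toFun v := ⟨fun i => v i, by
    choose x hx using fun i => (v i).2
    exact ⟨x, funext hx⟩⟩
  invFun w := fun i => ⟨w.1 i, by
    obtain ⟨x, hx⟩ := w.2
    exact ⟨x i, congrFun hx i⟩⟩
  map_add' _ _ := rfl
  map_smul' _ _ := rfl

end LinearMap

section GorensteinFlat

variable {R : Type u} [Ring R]

lemma flatModule_of_subsingleton (M : Type u) [AddCommGroup M] [Module R M] [Subsingleton M] :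
    FlatModule R M := fun N _ _ _ _ _ _ _ =>
  have := NCTensor.subsingleton_of_right (R := R) (N := N) (M := M)
  Function.injective_of_subsingleton _

lemma isGorensteinFlat_of_subsingleton (M : Type u) [AddCommGroup M] [Module R M]
    [Subsingleton M] : IsGorensteinFlat R M := by
  refine ⟨⟨fun _ => ModuleCat.of R M, fun _ => 0, fun _ => flatModule_of_subsingleton M,
    fun _ => ?_, ⟨LinearEquiv.ofSubsingleton _ _⟩, fun I _ _ _ _ => ?_⟩⟩
  · exact fun _ => ⟨fun _ => ⟨0, Subsingleton.elim _ _⟩, fun _ => Subsingleton.elim _ _⟩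
  · have := NCTensor.subsingleton_of_right (R := R) (N := I) (M := M)
    exact fun _ => ⟨fun _ => ⟨0, Subsingleton.elim _ _⟩, fun _ => Subsingleton.elim _ _⟩

lemma IsGorensteinFlat.of_linearEquiv {M M' : Type u} [AddCommGroup M] [Module R M]
    [AddCommGroup M'] [Module R M'] (e : M ≃ₗ[R] M') (h : IsGorensteinFlat R M) :
    IsGorensteinFlat R M' :=
  h.map fun C => { C with iso := C.iso.map e.symm.trans }

lemma gfdLE_of_linearEquiv : ∀ {k : ℕ} {M M' : ModuleCat.{u} R} (_ : M ≃ₗ[R] M'),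
    gfdLE R k M → gfdLE R k M'
  | 0, _, _, e, h => h.of_linearEquiv e
  | _ + 1, _, _, e, ⟨G, f, hf, hG, hker⟩ => by
    refine ⟨G, e.toLinearMap ∘ₗ f, e.surjective.comp hf, hG, ?_⟩
    rwa [LinearMap.ker_comp, LinearMap.ker_eq_bot.2 e.injective, Submodule.comap_bot]

lemma gfdLE_succ : ∀ {k : ℕ} {M : ModuleCat.{u} R}, gfdLE R k M → gfdLE R (k + 1) M
  | 0, M, h => ⟨M, LinearMap.id, Function.surjective_id, h,
      have : Subsingleton (LinearMap.ker (LinearMap.id : M →ₗ[R] M)) := by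
        rw [LinearMap.ker_id]; infer_instance
      isGorensteinFlat_of_subsingleton _⟩
  | _ + 1, _, ⟨G, f, hf, hG, hker⟩ => ⟨G, f, hf, hG, gfdLE_succ hker⟩

lemma gfdLE_mono {j k : ℕ} (hjk : j ≤ k) {M : ModuleCat.{u} R} (h : gfdLE R j M) :
    gfdLE R k M := by
  induction hjk with
  | refl => exact h
  | step _ ih => exact gfdLE_succ ih

lemma gfDim_le_iff {M : ModuleCat.{u} R} {k : ℕ} : gfDim R M ≤ k ↔ gfdLE R k M := by
  refine ⟨fun h => ?_, fun h => sInf_le ⟨k, rfl, h⟩⟩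
  have hne : {n : ℕ∞ | ∃ j : ℕ, n = j ∧ gfdLE R j M}.Nonempty := by
    by_contra hemp
    rw [Set.not_nonempty_iff_eq_empty] at hemp
    rw [gfDim, hemp, sInf_empty, top_le_iff] at h
    exact ENat.natCast_ne_top k h
  obtain ⟨j, hj, hM⟩ := csInf_mem hne
  rw [← gfDim] at hj
  exact gfdLE_mono (by exact_mod_cast hj ▸ h) hM

end GorensteinFlat

/-- `T` is a direct factor of `S`: `incl 1` is a central idempotent `e` of `S`, and `proj`
restricts to a ring isomorphism `e S ≃ T` with inverse `incl`. -/
structure DirectFactor (S T : Type u) [Ring S] [Ring T] where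
  proj : S →+* T
  incl : T →ₙ+* S
  proj_incl (t : T) : proj (incl t) = t
  incl_proj (s : S) : incl (proj s) = incl 1 * s
  incl_one_mul (s : S) : incl 1 * s = s * incl 1

namespace DirectFactor

variable {S T : Type u} [Ring S] [Ring T] (d : DirectFactor S T)

lemma proj_incl_one : d.proj (d.incl 1) = 1 := d.proj_incl 1

lemma incl_one_mul_incl (t : T) : d.incl 1 * d.incl t = d.incl t := by
  rw [← map_mul, one_mul]

lemma incl_proj' (s : S) : d.incl (d.proj s) = s * d.incl 1 := by
  rw [incl_proj, incl_one_mul]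

def op : DirectFactor Sᵐᵒᵖ Tᵐᵒᵖ where
  proj := RingHom.op d.proj
  incl := NonUnitalRingHom.op d.incl
  proj_incl t := congrArg MulOpposite.op (d.proj_incl t.unop)
  incl_proj s := congrArg MulOpposite.op (d.incl_proj' s.unop)
  incl_one_mul s := congrArg MulOpposite.op (d.incl_one_mul s.unop).symm

@[simp] lemma op_incl (t : Tᵐᵒᵖ) : d.op.incl t = MulOpposite.op (d.incl t.unop) := rfl


section Component

variable (M : Type u) [AddCommGroup M] [Module S M]

def componentSubmodule : Submodule S M where
  carrier := {x | d.incl 1 • x = x}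
  add_mem' {x y} hx hy := by
    show d.incl 1 • (x + y) = x + y
    rw [smul_add, hx, hy]
  zero_mem' := smul_zero _
  smul_mem' s x hx := by
    show d.incl 1 • s • x = s • x
    rw [smul_smul, d.incl_one_mul, mul_smul, hx]

abbrev Component : Type u := d.componentSubmodule M

variable {d M}

lemma Component.idem_smul (x : d.Component M) : d.incl 1 • (x : M) = x := x.2

instance Component.instModule : Module T (d.Component M) where
  smul t x := ⟨d.incl t • (x : M), by
    show d.incl 1 • d.incl t • (x : M) = d.incl t • (x : M)
    rw [smul_smul, incl_one_mul_incl]⟩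
  one_smul x := Subtype.ext x.idem_smul
  mul_smul t t' x := Subtype.ext <| by
    show d.incl (t * t') • (x : M) = d.incl t • d.incl t' • (x : M)
    rw [map_mul, mul_smul]
  smul_zero t := Subtype.ext (smul_zero _)
  smul_add t x y := Subtype.ext (smul_add _ (x : M) y)
  add_smul t t' x := Subtype.ext <| by
    show d.incl (t + t') • (x : M) = d.incl t • (x : M) + d.incl t' • (x : M)
    rw [map_add, add_smul]
  zero_smul x := Subtype.ext <| by
    show d.incl 0 • (x : M) = 0
    rw [map_zero, zero_smul]

@[simp]
lemma Component.coe_smul (t : T) (x : d.Component M) :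
    ((t • x : d.Component M) : M) = d.incl t • (x : M) :=
  rfl

variable (d M)

def componentProj : M →ₗ[S] d.Component M where
  toFun x := ⟨d.incl 1 • x, by
    show d.incl 1 • d.incl 1 • x = d.incl 1 • x
    rw [smul_smul, incl_one_mul_incl]⟩
  map_add' x y := Subtype.ext (smul_add _ x y)
  map_smul' s x := Subtype.ext <| by
    show d.incl 1 • s • x = s • d.incl 1 • x
    rw [smul_smul, smul_smul, d.incl_one_mul]

variable {d M}

@[simp]
lemma coe_componentProj (x : M) : (d.componentProj M x : M) = d.incl 1 • x := rfl

lemma componentProj_smul (s : S) (x : M) :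
    d.componentProj M (s • x) = d.proj s • d.componentProj M x :=
  Subtype.ext <| by
    rw [coe_componentProj, Component.coe_smul, coe_componentProj, smul_smul, smul_smul,
      incl_proj', mul_assoc, incl_one_mul_incl, incl_one_mul]

@[simp]
lemma componentProj_coe (x : d.Component M) : d.componentProj M x = x :=
  Subtype.ext x.idem_smul

variable {M' M'' : Type u} [AddCommGroup M'] [Module S M'] [AddCommGroup M''] [Module S M'']

def Component.map (f : M →ₗ[S] M') : d.Component M →ₗ[T] d.Component M' where
  toFun x := ⟨f x, by
    show d.incl 1 • f x = f x
    rw [← map_smul, x.idem_smul]⟩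
  map_add' x y := Subtype.ext (map_add f (x : M) y)
  map_smul' t x := Subtype.ext (map_smul f (d.incl t) (x : M))

@[simp]
lemma Component.coe_map (f : M →ₗ[S] M') (x : d.Component M) : (Component.map f x : M') = f x :=
  rfl

lemma Component.map_componentProj (f : M →ₗ[S] M') (x : M) :
    Component.map f (d.componentProj M x) = d.componentProj M' (f x) :=
  Subtype.ext (map_smul f (d.incl 1) x)

lemma Component.map_surjective {f : M →ₗ[S] M'} (hf : Function.Surjective f) :
    Function.Surjective (Component.map (d := d) f) := fun y => by
  obtain ⟨x, hx⟩ := hf y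
  exact ⟨d.componentProj M x, by rw [map_componentProj, hx, componentProj_coe]⟩

lemma Component.map_injective {f : M →ₗ[S] M'} (hf : Function.Injective f) :
    Function.Injective (Component.map (d := d) f) := fun _ _ hxy =>
  Subtype.ext (hf (congrArg Subtype.val hxy))

lemma Component.map_exact {f : M →ₗ[S] M'} {g : M' →ₗ[S] M''} (hfg : Function.Exact f g) :
    Function.Exact (Component.map (d := d) f) (Component.map (d := d) g) := fun y => by
  refine ⟨fun hy => ?_, ?_⟩
  · obtain ⟨x, hx⟩ := (hfg y).1 (congrArg Subtype.val hy)
    exact ⟨d.componentProj M x, by rw [map_componentProj, hx, componentProj_coe]⟩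
  · rintro ⟨x, rfl⟩
    exact Subtype.ext (hfg.apply_apply_eq_zero (x : M))

def Component.congr (e : M ≃ₗ[S] M') : d.Component M ≃ₗ[T] d.Component M' :=
  LinearEquiv.ofLinearMap (Component.map e) (Component.map e.symm) (by ext; simp) (by ext; simp)

def Component.kerEquiv (f : M →ₗ[S] M') :
    d.Component (LinearMap.ker f) ≃ₗ[T] LinearMap.ker (Component.map (d := d) f) where
  toFun x := ⟨⟨x.1.1, congrArg Subtype.val x.2⟩, Subtype.ext x.1.2⟩
  invFun y := ⟨⟨y.1.1, congrArg Subtype.val y.2⟩, Subtype.ext y.1.2⟩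
  map_add' _ _ := rfl
  map_smul' _ _ := rfl

def Component.rangeEquiv (f : M →ₗ[S] M') :
    d.Component (LinearMap.range f) ≃ₗ[T] LinearMap.range (Component.map (d := d) f) where
  toFun x := ⟨⟨x.1.1, congrArg Subtype.val x.2⟩, by
    obtain ⟨w, hw⟩ := x.1.2
    exact ⟨d.componentProj M w, Subtype.ext <| by
      rw [coe_map, coe_componentProj, map_smul, hw]
      exact congrArg Subtype.val x.2⟩⟩
  invFun y := ⟨⟨y.1.1, by
    obtain ⟨w, hw⟩ := y.2
    exact ⟨w, congrArg Subtype.val hw⟩⟩, Subtype.ext y.1.2⟩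
  map_add' _ _ := rfl
  map_smul' _ _ := rfl

end Component

section Inflation

def Inflation (_ : DirectFactor S T) (A : Type u) : Type u := A

variable (A : Type u) [AddCommGroup A] [Module T A]

instance : AddCommGroup (d.Inflation A) := inferInstanceAs (AddCommGroup A)

instance : Module S (d.Inflation A) := Module.compHom A d.proj

variable {d A}

lemma Inflation.smul_def (s : S) (a : d.Inflation A) :
    s • a = (show A from d.proj s • (show A from a)) := rfl

variable {B : Type u} [AddCommGroup B] [Module T B]

def Inflation.map (f : A →ₗ[T] B) : d.Inflation A →ₗ[S] d.Inflation B where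
  toFun := f
  map_add' := f.map_add
  map_smul' s := f.map_smul (d.proj s)

variable (d A)

def componentInflationEquiv : d.Component (d.Inflation A) ≃ₗ[T] A where
  toFun x := x.1
  invFun a := ⟨a, by
    show d.proj (d.incl 1) • a = a
    rw [proj_incl_one, one_smul]⟩
  map_add' _ _ := rfl
  map_smul' t x := by
    show d.proj (d.incl t) • (show A from x.1) = t • (show A from x.1)
    rw [proj_incl]

end Inflation

section Tensor

variable (I : Type u) [AddCommGroup I] [Module Tᵐᵒᵖ I] (M : Type u) [AddCommGroup M]
  [Module S M]

noncomputable def tensorInflationEquiv :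
    NCTensor S (d.op.Inflation I) M ≃ₗ[ℤ] NCTensor T I (d.Component M) :=
  LinearEquiv.ofLinearMap
    (NCTensor.map (AddMonoidHom.id I) (d.componentProj M).toAddMonoidHom fun n s m => by
      show NCTensor.tmul T (MulOpposite.op (d.proj s) • (show I from n)) _ = _
      rw [NCTensor.op_smul_tmul]
      exact congrArg _ (componentProj_smul s m).symm)
    (NCTensor.map (AddMonoidHom.id I) (d.componentSubmodule M).subtype.toAddMonoidHom
      fun n t x => by
      show _ = NCTensor.tmul S (show d.op.Inflation I from n) (d.incl t • (x : M))
      rw [← NCTensor.op_smul_tmul]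
      congr 1
      show _ = MulOpposite.op (d.proj (d.incl t)) • n
      rw [proj_incl]; rfl)
    (by
      ext n x
      exact congrArg (NCTensor.tmul T n) (componentProj_coe x))
    (by
      -- `e = d.incl 1` acts as `1` on an inflated module, so `n ⊗ e m = e n ⊗ m = n ⊗ m`.
      ext n m
      show NCTensor.tmul S n (d.incl 1 • m) = NCTensor.tmul S n m
      rw [← NCTensor.op_smul_tmul]
      congr 1
      show MulOpposite.op (d.proj (d.incl 1)) • (show I from n) = n
      rw [proj_incl_one, MulOpposite.op_one, one_smul])

variable {I M}

lemma NCmap_comp_tensorInflationEquiv {M' : Type u} [AddCommGroup M'] [Module S M']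
    (f : M →ₗ[S] M') :
    NCmap T I (Component.map f) ∘ₗ (d.tensorInflationEquiv I M).toLinearMap =
      (d.tensorInflationEquiv I M').toLinearMap ∘ₗ NCmap S (d.op.Inflation I) f := by
  ext n m
  exact congrArg (NCTensor.tmul T (show I from n)) (Component.map_componentProj f m)

lemma NCmapL_comp_tensorInflationEquiv {I' : Type u} [AddCommGroup I'] [Module Tᵐᵒᵖ I']
    (f : I →ₗ[Tᵐᵒᵖ] I') :
    NCmapL T (d.Component M) f ∘ₗ (d.tensorInflationEquiv I M).toLinearMap =
      (d.tensorInflationEquiv I' M).toLinearMap ∘ₗ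
        NCmapL S M (Inflation.map (d := d.op) f) := by
  ext n m
  rfl

end Tensor

variable {d}

lemma flat_component {M : Type u} [AddCommGroup M] [Module S M] (hM : FlatModule S M) :
    FlatModule T (d.Component M) := by
  intro N N' _ _ _ _ f hf
  have h := (d.tensorInflationEquiv N' M).injective.comp
    (hM (d.op.Inflation N) (d.op.Inflation N') (Inflation.map f) hf)
  rw [← LinearEquiv.coe_toLinearMap, ← LinearMap.coe_comp,
    ← NCmapL_comp_tensorInflationEquiv, LinearMap.coe_comp] at h
  exact h.of_comp_right (d.tensorInflationEquiv N M).surjective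

lemma injective_inflation {A : Type u} [AddCommGroup A] [Module T A]
    (hA : Module.Injective T A) : Module.Injective S (d.Inflation A) where
  out X Y _ _ _ _ f hf g := by
    -- `S`-maps `X → Inflation A` are `T`-maps `e X → A`: extend `g` on components and
    -- precompose with `x ↦ e x`.
    let g' : d.Component X →ₗ[T] A :=
      { toFun x := g x
        map_add' x y := map_add g (x : X) y
        map_smul' t x := by
          show g (d.incl t • (x : X)) = t • (show A from g x)
          rw [map_smul, Inflation.smul_def, proj_incl] }
    obtain ⟨h, hh⟩ := hA.out (Component.map f) (Component.map_injective hf) g'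
    refine ⟨{ toFun y := h (d.componentProj Y y)
              map_add' y y' := by rw [map_add, map_add]; rfl
              map_smul' s y := by rw [componentProj_smul, map_smul]; rfl }, fun x => ?_⟩
    show h (d.componentProj Y (f x)) = g x
    rw [← Component.map_componentProj, hh]
    show g (d.incl 1 • x) = g x
    rw [map_smul, Inflation.smul_def, proj_incl_one, one_smul]

lemma injective_component {M : Type u} [AddCommGroup M] [Module S M]
    (hM : Module.Injective S M) : Module.Injective T (d.Component M) where
  out X Y _ _ _ _ f hf g := by
    -- `T`-maps `X → e M` are `S`-maps `Inflation X → M`: extend there and project to `e M`.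
    let g' : d.Inflation X →ₗ[S] M :=
      { toFun x := (g x : M)
        map_add' x y := congrArg Subtype.val (map_add g x y)
        map_smul' s x := by
          show (g (d.proj s • (show X from x)) : M) = s • (g x : M)
          rw [map_smul, Component.coe_smul, incl_proj', mul_smul, (g x).idem_smul] }
    obtain ⟨H, hH⟩ := hM.out (Inflation.map (d := d) f) hf g'
    have H_smul (t : T) (y : Y) : H (t • y) = d.incl t • H y := by
      have : (t • y : Y) = (d.incl t • (show d.Inflation Y from y) : d.Inflation Y) := by
        rw [Inflation.smul_def, proj_incl]
      rw [this, map_smul]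
    refine ⟨{ toFun y := d.componentProj M (H y)
              map_add' y y' := (congrArg _ (map_add H y y')).trans (map_add _ _ _)
              map_smul' t y := by
                rw [H_smul, componentProj_smul, proj_incl]; rfl }, fun x => ?_⟩
    show d.componentProj M (H (f x)) = g x
    rw [show H (f x) = (g x : M) from hH x, componentProj_coe]

variable (d)

noncomputable def componentResolution {M : Type u} [AddCommGroup M] [Module S M]
    (C : CompleteFlatResolution S M) : CompleteFlatResolution T (d.Component M) where
  F z := ModuleCat.of T (d.Component (C.F z))
  d z := Component.map (C.d z)
  flat z := flat_component (C.flat z)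
  exact z := Component.map_exact (C.exact z)
  iso := C.iso.map fun e => (Component.congr e).trans (Component.rangeEquiv (C.d (-1)))
  tensorExact I _ _ hI z :=
    Function.Exact.of_ladder_linearEquiv_of_exact (d.NCmap_comp_tensorInflationEquiv _)
      (d.NCmap_comp_tensorInflationEquiv _)
      (C.tensorExact (d.op.Inflation I) (d.op.injective_inflation hI) z)

lemma gfdLE_component : ∀ {k : ℕ} {M : ModuleCat.{u} S}, gfdLE S k M →
    gfdLE T k (ModuleCat.of T (d.Component M))
  | 0, _, ⟨C⟩ => ⟨d.componentResolution C⟩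
  | _ + 1, _, ⟨G, f, hf, ⟨C⟩, hker⟩ =>
    ⟨ModuleCat.of T (d.Component G), Component.map f, Component.map_surjective hf,
      ⟨d.componentResolution C⟩,
      gfdLE_of_linearEquiv (Component.kerEquiv f) (gfdLE_component hker)⟩

section Pi

variable {ι : Type} [DecidableEq ι] (R : ι → Type u) [∀ i, Ring (R i)]

def pi (i : ι) : DirectFactor (∀ j, R j) (R i) where
  proj := Pi.evalRingHom R i
  incl :=
    { toFun := Pi.single i
      map_mul' := Pi.single_mul i
      map_zero' := Pi.single_zero i
      map_add' := Pi.single_add i }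
  proj_incl := Pi.single_eq_same i
  incl_proj s := funext fun j => by
    show Pi.single i (s i) j = Pi.single i 1 j * s j
    by_cases h : j = i
    · subst h; simp
    · simp [Pi.single_eq_of_ne h]
  incl_one_mul s := funext fun j => by
    show Pi.single i 1 j * s j = s j * Pi.single i 1 j
    by_cases h : j = i
    · subst h; simp
    · simp [Pi.single_eq_of_ne h]

variable {R}

lemma pi_incl_one_mul_incl_one {i j : ι} (h : i ≠ j) : (pi R i).incl 1 * (pi R j).incl 1 = 0 :=
  funext fun k => by
    show Pi.single i 1 k * Pi.single j 1 k = (0 : R k)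
    by_cases hk : k = i
    · subst hk; rw [Pi.single_eq_of_ne h, mul_zero]
    · rw [Pi.single_eq_of_ne hk, zero_mul]

lemma sum_pi_incl_one [Fintype ι] : ∑ i, (pi R i).incl 1 = 1 :=
  Finset.univ_sum_single (1 : ∀ i, R i)

noncomputable def piDecomposition [Fintype ι] (M : Type u) [AddCommGroup M]
    [Module (∀ i, R i) M] :
    M ≃ₗ[∀ i, R i] ∀ i, (pi R i).Component M where
  toFun x i := (pi R i).componentProj M x
  invFun v := ∑ i, (v i : M)
  map_add' x y := funext fun i => map_add _ x y
  map_smul' s x := funext fun i => componentProj_smul s x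
  left_inv x := by
    simp only [coe_componentProj]
    rw [← Finset.sum_smul, sum_pi_incl_one, one_smul]
  right_inv v := funext fun i => Subtype.ext <| by
    show (pi R i).incl 1 • ∑ j, (v j : M) = v i
    rw [Finset.smul_sum, Finset.sum_eq_single i]
    · exact (v i).idem_smul
    · intro j _ hj
      rw [← (v j).idem_smul, smul_smul, pi_incl_one_mul_incl_one hj.symm, zero_smul]
    · simp

lemma pi_incl_smul_single {A : ι → Type u} [∀ i, AddCommGroup (A i)]
    [∀ i, Module (R i) (A i)] (i : ι) (r : R i) (a : A i) :
    (pi R i).incl r • Pi.single i a = (Pi.single i (r • a) : ∀ j, A j) :=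
  (Pi.single_smul₀ i r a).symm

end Pi

section Tensor

variable {ι : Type} [DecidableEq ι] {R : ι → Type u} [∀ i, Ring (R i)]
  (N : Type u) [AddCommGroup N] [Module (∀ i, R i)ᵐᵒᵖ N]
  (A : ι → Type u) [∀ i, AddCommGroup (A i)] [∀ i, Module (R i) (A i)]

noncomputable def tensorPiToPi :
    NCTensor (∀ i, R i) N (∀ i, A i) →ₗ[ℤ]
      ∀ i, NCTensor (R i) ((pi R i).op.Component N) (A i) :=
  LinearMap.pi fun i => NCTensor.map ((pi R i).op.componentProj N).toAddMonoidHom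
    (Pi.evalAddMonoidHom A i) fun n s a => by
      show NCTensor.tmul (R i) ((pi R i).op.componentProj N (MulOpposite.op s • n)) (a i) =
        NCTensor.tmul (R i) ((pi R i).op.componentProj N n) (s i • a i)
      rw [componentProj_smul]
      exact NCTensor.op_smul_tmul _ _ _

@[simp]
lemma tensorPiToPi_tmul (n : N) (a : ∀ i, A i) (i : ι) :
    tensorPiToPi N A (NCTensor.tmul _ n a) i =
      NCTensor.tmul (R i) ((pi R i).op.componentProj N n) (a i) := rfl

variable [Fintype ι]

noncomputable def tensorPiOfPi :
    (∀ i, NCTensor (R i) ((pi R i).op.Component N) (A i)) →ₗ[ℤ]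
      NCTensor (∀ i, R i) N (∀ i, A i) :=
  LinearMap.lsum ℤ _ ℤ fun i =>
    NCTensor.map ((pi R i).op.componentSubmodule N).subtype.toAddMonoidHom
      (AddMonoidHom.single A i) fun x r a => by
        show NCTensor.tmul _ (MulOpposite.op ((pi R i).incl r) • (x : N)) _ = _
        rw [NCTensor.op_smul_tmul]
        exact congrArg _ (pi_incl_smul_single i r a)

lemma tensorPiOfPi_single_tmul (i : ι) (x : (pi R i).op.Component N) (a : A i) :
    tensorPiOfPi N A (Pi.single i (NCTensor.tmul (R i) x a)) =
      NCTensor.tmul _ (x : N) (Pi.single i a) :=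
  LinearMap.lsum_piSingle _ _ _ _ _ _

noncomputable def tensorPiEquiv :
    NCTensor (∀ i, R i) N (∀ i, A i) ≃ₗ[ℤ]
      ∀ i, NCTensor (R i) ((pi R i).op.Component N) (A i) :=
  LinearEquiv.ofLinearMap (tensorPiToPi N A) (tensorPiOfPi N A)
    (by
      ext i x a j
      simp only [LinearMap.coe_comp, Function.comp_apply, LinearMap.coe_single,
        tensorPiOfPi_single_tmul, tensorPiToPi_tmul, LinearMap.id_coe, id_eq]
      by_cases h : j = i
      · subst h
        rw [Pi.single_eq_same, Pi.single_eq_same, componentProj_coe]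
      · rw [Pi.single_eq_of_ne h, Pi.single_eq_of_ne h, NCTensor.tmul_zero])
    (by
      ext n a
      rw [LinearMap.comp_apply, ← Finset.univ_sum_single (tensorPiToPi N A _), map_sum]
      simp only [tensorPiToPi_tmul, tensorPiOfPi_single_tmul, coe_componentProj,
        op_incl, MulOpposite.unop_one, NCTensor.op_smul_tmul, pi_incl_smul_single, one_smul]
      rw [← NCTensor.tmul_sum, Finset.univ_sum_single]
      rfl)

variable {N A}

lemma piMap_NCmap_comp_tensorPiEquiv {B : ι → Type u} [∀ i, AddCommGroup (B i)]
    [∀ i, Module (R i) (B i)] (f : ∀ i, A i →ₗ[R i] B i) :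
    LinearMap.piMap (fun i => NCmap (R i) ((pi R i).op.Component N) (f i)) ∘ₗ
        (tensorPiEquiv N A).toLinearMap =
      (tensorPiEquiv N B).toLinearMap ∘ₗ NCmap (∀ i, R i) N (LinearMap.piMap' f) := by
  ext n a i
  rfl

lemma piMap_NCmapL_comp_tensorPiEquiv {N' : Type u} [AddCommGroup N']
    [Module (∀ i, R i)ᵐᵒᵖ N'] (φ : N →ₗ[(∀ i, R i)ᵐᵒᵖ] N') :
    LinearMap.piMap (fun i => NCmapL (R i) (A i) (Component.map (d := (pi R i).op) φ)) ∘ₗ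
        (tensorPiEquiv N A).toLinearMap =
      (tensorPiEquiv N' A).toLinearMap ∘ₗ NCmapL (∀ i, R i) (∀ i, A i) φ := by
  ext n a i
  exact congrArg (NCTensor.tmul (R i) · (a i)) (Component.map_componentProj φ n)

end Tensor

variable {ι : Type} [Fintype ι] [DecidableEq ι] {R : ι → Type u} [∀ i, Ring (R i)]

lemma flat_pi {A : ι → Type u} [∀ i, AddCommGroup (A i)] [∀ i, Module (R i) (A i)]
    (hA : ∀ i, FlatModule (R i) (A i)) : FlatModule (∀ i, R i) (∀ i, A i) := by
  intro N N' _ _ _ _ φ hφ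
  have h := (Function.Injective.piMap fun i =>
    hA i _ _ (Component.map φ) (Component.map_injective hφ)).comp (tensorPiEquiv N A).injective
  rw [← LinearEquiv.coe_toLinearMap, ← LinearMap.coe_piMap, ← LinearMap.coe_comp,
    piMap_NCmapL_comp_tensorPiEquiv, LinearMap.coe_comp] at h
  exact h.of_comp

noncomputable def piResolution {M : ι → Type u} [∀ i, AddCommGroup (M i)]
    [∀ i, Module (R i) (M i)] (C : ∀ i, CompleteFlatResolution (R i) (M i)) :
    CompleteFlatResolution (∀ i, R i) (∀ i, M i) where
  F z := ModuleCat.of (∀ i, R i) (∀ i, (C i).F z)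
  d z := LinearMap.piMap' fun i => (C i).d z
  flat z := flat_pi fun i => (C i).flat z
  exact z := Function.Exact.piMap fun i => (C i).exact z
  iso := ⟨(LinearEquiv.piCongrRight' fun i => (C i).iso.some).trans
    (LinearMap.rangePiMap'Equiv _)⟩
  tensorExact _ _ _ hI z :=
    (Function.Exact.iff_of_ladder_linearEquiv (piMap_NCmap_comp_tensorPiEquiv _)
      (piMap_NCmap_comp_tensorPiEquiv _)).1 <|
      Function.Exact.piMap fun i => (C i).tensorExact _ ((pi R i).op.injective_component hI) z

lemma gfdLE_pi : ∀ {k : ℕ} {M : ∀ i, ModuleCat.{u} (R i)}, (∀ i, gfdLE (R i) k (M i)) →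
    gfdLE (∀ i, R i) k (ModuleCat.of _ (∀ i, M i))
  | 0, _, h => ⟨piResolution fun i => (h i).some⟩
  | _ + 1, _, h => by
    choose G f hf hG hker using h
    exact ⟨ModuleCat.of _ (∀ i, G i), LinearMap.piMap' f, Function.Surjective.piMap hf,
      ⟨piResolution fun i => (hG i).some⟩,
      gfdLE_of_linearEquiv (LinearMap.kerPiMap'Equiv f) (gfdLE_pi hker)⟩

lemma gfdLE_of_forall_component {k : ℕ} {M : ModuleCat.{u} (∀ i, R i)}
    (h : ∀ i, gfdLE (R i) k (ModuleCat.of (R i) ((pi R i).Component M))) :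
    gfdLE (∀ i, R i) k M :=
  gfdLE_of_linearEquiv (piDecomposition M).symm (gfdLE_pi h)

end DirectFactor

/-- For a finite family of commutative rings, the weak Gorenstein global dimension of the
product ring is the supremum of the weak Gorenstein global dimensions of the factors. -/
theorem stmt10 (m : ℕ) (R : Fin m → Type u) [∀ i, CommRing (R i)] :
    wGgldim (∀ i, R i) = ⨆ i, wGgldim (R i) := by
  refine le_antisymm (iSup_le fun M => ENat.le_of_forall_ge_natCast fun k hk => ?_)
    (iSup_le fun i => iSup_le fun A => ENat.le_of_forall_ge_natCast fun k hk => ?_)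
  · refine gfDim_le_iff.2 (DirectFactor.gfdLE_of_forall_component fun i => gfDim_le_iff.1 ?_)
    exact (le_iSup (fun A => gfDim (R i) A) _).trans ((le_iSup (fun i => wGgldim (R i)) i).trans hk)
  · have hA := gfDim_le_iff.1 <| (le_iSup (fun M => gfDim (∀ i, R i) M)
      (ModuleCat.of _ ((DirectFactor.pi R i).Inflation A))).trans hk
    exact gfDim_le_iff.2 <| gfdLE_of_linearEquiv ((DirectFactor.pi R i).componentInflationEquiv A)
      ((DirectFactor.pi R i).gfdLE_component hA)
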